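/- arXiv:2407.16936 — 2 statements merged into one kernel-verified Lean document; each statement's English description precedes it below -/
import Mathlib

section
/- For a Gaussian mixture distribution π = Σᵢ wᵢ N(μᵢ, σ²I) on ℝ^d with positive weights summing to 1, the negative log-density satisfies -∇² log π ⪯ (1/σ²) I. -/
/-!
Write `p_i(x) = a_i exp(-‖x - μ_i‖² / (2s))` with `s = σ²` (the Gaussian normalising constant is
absorbed into the weights `a_i`) and `F = ∑ p_i`. Differentiating `-log F` twice in a direction `v`
gives `‖v‖² / s` minus `s⁻²` times the variance of `⟨x - μ_i, v⟩` under the posterior weights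
`p_i(x) / F(x)`; the variance is nonnegative by Cauchy–Schwarz.
-/

open Real
open scoped RealInnerProductSpace

section GaussianMixture

variable {E ι : Type*} [NormedAddCommGroup E] [Fintype ι]

noncomputable def gaussianBump (a : ℝ) (m : E) (s : ℝ) (z : E) : ℝ :=
  a * exp (-‖z - m‖ ^ 2 / (2 * s))

noncomputable def gaussianMixture (a : ι → ℝ) (μ : ι → E) (s : ℝ) (z : E) : ℝ :=
  ∑ i, gaussianBump (a i) (μ i) s z

theorem gaussianBump_pos {a : ℝ} (ha : 0 < a) (m : E) (s : ℝ) (z : E) :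
    0 < gaussianBump a m s z :=
  mul_pos ha (exp_pos _)

theorem gaussianMixture_pos [Nonempty ι] {a : ι → ℝ} (ha : ∀ i, 0 < a i) (μ : ι → E) (s : ℝ)
    (z : E) : 0 < gaussianMixture a μ s z :=
  Finset.sum_pos (fun i _ => gaussianBump_pos (ha i) _ _ _) Finset.univ_nonempty

variable [InnerProductSpace ℝ E]

theorem hasFDerivAt_gaussianBump (a : ℝ) (m : E) {s : ℝ} (z : E) :
    HasFDerivAt (gaussianBump a m s) ((-s⁻¹ * gaussianBump a m s z) • innerSL ℝ (z - m)) z := by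
  have hsub : HasFDerivAt (fun z : E => z - m) (ContinuousLinearMap.id ℝ E) z :=
    (hasFDerivAt_id z).sub_const m
  refine ((hsub.norm_sq.neg.mul_const (2 * s)⁻¹).exp.const_mul a).congr_fderiv ?_
  ext u
  simp only [gaussianBump, smul_apply, innerSL_apply_apply, neg_apply,
    ContinuousLinearMap.comp_apply, ContinuousLinearMap.id_apply, smul_eq_mul, nsmul_eq_mul, div_eq_mul_inv, Pi.neg_apply]
  ring

theorem hasFDerivAt_gaussianMixture (a : ι → ℝ) (μ : ι → E) {s : ℝ} (z : E) :
    HasFDerivAt (gaussianMixture a μ s)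
      (∑ i, (-s⁻¹ * gaussianBump (a i) (μ i) s z) • innerSL ℝ (z - μ i)) z :=
  HasFDerivAt.fun_sum fun i _ => hasFDerivAt_gaussianBump (a i) (μ i) z

theorem hasFDerivAt_gaussianBump_mul_inner (a : ℝ) (m v : E) {s : ℝ} (z : E) :
    HasFDerivAt (fun y => gaussianBump a m s y * ⟪y - m, v⟫)
      (gaussianBump a m s z • innerSL ℝ v +
        ⟪z - m, v⟫ • (-s⁻¹ * gaussianBump a m s z) • innerSL ℝ (z - m)) z := by
  have hinner : HasFDerivAt (fun y : E => ⟪y - m, v⟫) (innerSL ℝ v) z := by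
    refine (((hasFDerivAt_id z).sub_const m).inner ℝ (hasFDerivAt_const v z)).congr_fderiv ?_
    ext u
    simp [fderivInnerCLM_apply, real_inner_comm]
  exact (hasFDerivAt_gaussianBump a m z).mul hinner

theorem fderiv_neg_log_gaussianMixture_apply (a : ι → ℝ) (μ : ι → E) {s : ℝ}
    {y : E} (hy : gaussianMixture a μ s y ≠ 0) (v : E) :
    fderiv ℝ (fun z => -log (gaussianMixture a μ s z)) y v =
      s⁻¹ * ((∑ i, gaussianBump (a i) (μ i) s y * ⟪y - μ i, v⟫) * (gaussianMixture a μ s y)⁻¹) := by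
  rw [((hasFDerivAt_gaussianMixture a μ y).log hy).fun_neg.fderiv]
  simp only [neg_apply, smul_apply, FunLike.coe_sum, Finset.sum_apply, innerSL_apply_apply,
    smul_eq_mul, Finset.sum_mul, Finset.mul_sum, ← Finset.sum_neg_distrib]
  exact Finset.sum_congr rfl fun i _ => by ring

theorem fderiv_fderiv_neg_log_gaussianMixture_apply (a : ι → ℝ) (μ : ι → E) (s : ℝ)
    (hF : ∀ y, gaussianMixture a μ s y ≠ 0) (x v : E) :
    fderiv ℝ (fun y => fderiv ℝ (fun z => -log (gaussianMixture a μ s z)) y v) x v =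
      s⁻¹ * ‖v‖ ^ 2 - s⁻¹ ^ 2 *
        (gaussianMixture a μ s x * (∑ i, gaussianBump (a i) (μ i) s x * ⟪x - μ i, v⟫ ^ 2)
          - (∑ i, gaussianBump (a i) (μ i) s x * ⟪x - μ i, v⟫) ^ 2) /
            gaussianMixture a μ s x ^ 2 := by
  simp_rw [fderiv_neg_log_gaussianMixture_apply a μ (hF _)]
  have hmoment := HasFDerivAt.fun_sum fun i (_ : i ∈ Finset.univ) =>
    hasFDerivAt_gaussianBump_mul_inner (a i) (μ i) v (s := s) x
  have hinv : HasFDerivAt (fun y => (gaussianMixture a μ s y)⁻¹) _ x :=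
    (hasDerivAt_inv (hF x)).comp_hasFDerivAt x (hasFDerivAt_gaussianMixture a μ x)
  rw [((hmoment.fun_mul hinv).const_mul s⁻¹).fderiv]
  simp only [smul_apply, FunLike.coe_sum, Finset.sum_apply, innerSL_apply_apply, smul_eq_mul,
    add_apply, real_inner_self_eq_norm_sq]
  have hlinear : ∑ i, -s⁻¹ * gaussianBump (a i) (μ i) s x * ⟪x - μ i, v⟫ =
      -s⁻¹ * ∑ i, gaussianBump (a i) (μ i) s x * ⟪x - μ i, v⟫ := by
    rw [Finset.mul_sum]; exact Finset.sum_congr rfl fun i _ => by ring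
  have hquadratic : ∑ i, (gaussianBump (a i) (μ i) s x * ‖v‖ ^ 2 +
        ⟪x - μ i, v⟫ * (-s⁻¹ * gaussianBump (a i) (μ i) s x * ⟪x - μ i, v⟫)) =
      gaussianMixture a μ s x * ‖v‖ ^ 2 -
        s⁻¹ * ∑ i, gaussianBump (a i) (μ i) s x * ⟪x - μ i, v⟫ ^ 2 := by
    rw [gaussianMixture, Finset.sum_mul, Finset.mul_sum, ← Finset.sum_sub_distrib]
    exact Finset.sum_congr rfl fun i _ => by ring
  rw [hlinear, hquadratic]
  have hFx := hF x
  generalize gaussianMixture a μ s x = F at hFx ⊢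
  generalize s⁻¹ = t
  field_simp
  ring

theorem fderiv_fderiv_neg_log_gaussianMixture_le [Nonempty ι] {a : ι → ℝ} (ha : ∀ i, 0 < a i)
    (μ : ι → E) (s : ℝ) (x v : E) :
    fderiv ℝ (fun y => fderiv ℝ (fun z => -log (gaussianMixture a μ s z)) y v) x v ≤
      s⁻¹ * ‖v‖ ^ 2 := by
  rw [fderiv_fderiv_neg_log_gaussianMixture_apply a μ s
    (fun y => (gaussianMixture_pos ha μ s y).ne') x v]
  have hbump : ∀ i, 0 ≤ gaussianBump (a i) (μ i) s x := fun i => (gaussianBump_pos (ha i) _ _ _).le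
  have hcauchySchwarz : (∑ i, gaussianBump (a i) (μ i) s x * ⟪x - μ i, v⟫) ^ 2 ≤
      gaussianMixture a μ s x * ∑ i, gaussianBump (a i) (μ i) s x * ⟪x - μ i, v⟫ ^ 2 :=
    Finset.sum_sq_le_sum_mul_sum_of_sq_le_mul _ (fun i _ => hbump i)
      (fun i _ => mul_nonneg (hbump i) (sq_nonneg _)) (fun i _ => le_of_eq (by ring))
  have hvariance : 0 ≤ s⁻¹ ^ 2 * (gaussianMixture a μ s x *
      (∑ i, gaussianBump (a i) (μ i) s x * ⟪x - μ i, v⟫ ^ 2) -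
        (∑ i, gaussianBump (a i) (μ i) s x * ⟪x - μ i, v⟫) ^ 2) / gaussianMixture a μ s x ^ 2 := by
    have := sub_nonneg.mpr hcauchySchwarz
    positivity
  linarith

end GaussianMixture

theorem stmt_4_general (d N : ℕ) (hN : 0 < N) (σ : ℝ) (hσ : 0 < σ)
    (w : Fin N → ℝ) (hw : ∀ i, 0 < w i)
    (μ : Fin N → EuclideanSpace ℝ (Fin d)) :
    ∀ x v : EuclideanSpace ℝ (Fin d),
      (fderiv ℝ (fun y => fderiv ℝ
        (fun z => -Real.log (∑ i, w i *
          ((2 * Real.pi * σ ^ 2) ^ (-(d : ℝ) / 2) *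
            Real.exp (-‖z - μ i‖ ^ 2 / (2 * σ ^ 2))))) y v) x) v
      ≤ (1 / σ ^ 2) * ‖v‖ ^ 2 := by
  intro x v
  have : Nonempty (Fin N) := ⟨⟨0, hN⟩⟩
  set c := (2 * Real.pi * σ ^ 2) ^ (-(d : ℝ) / 2)
  have hc : 0 < c := rpow_pos_of_pos (by positivity) _
  have hmixture : (fun z => -log (∑ i, w i * (c * exp (-‖z - μ i‖ ^ 2 / (2 * σ ^ 2))))) =
      fun z => -log (gaussianMixture (fun i => w i * c) μ (σ ^ 2) z) := by
    simp only [gaussianMixture, gaussianBump, mul_assoc]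
  rw [hmixture, one_div]
  exact fderiv_fderiv_neg_log_gaussianMixture_le (fun i => mul_pos (hw i) hc) μ _ x v

/-- For a Gaussian mixture `π = Σᵢ wᵢ N(μᵢ, σ²I)` on `ℝ^d`,
`-∇² log π ⪯ (1/σ²) I`, stated as a directional second-derivative bound on `-log π`. -/
theorem stmt_4 (d N : ℕ) (hN : 0 < N) (σ : ℝ) (hσ : 0 < σ)
    (w : Fin N → ℝ) (hw : ∀ i, 0 < w i) (hsum : ∑ i, w i = 1)
    (μ : Fin N → EuclideanSpace ℝ (Fin d)) :
    ∀ x v : EuclideanSpace ℝ (Fin d),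
      (fderiv ℝ (fun y => fderiv ℝ
        (fun z => -Real.log (∑ i, w i *
          ((2 * Real.pi * σ ^ 2) ^ (-(d : ℝ) / 2) *
            Real.exp (-‖z - μ i‖ ^ 2 / (2 * σ ^ 2))))) y v) x) v
      ≤ (1 / σ ^ 2) * ‖v‖ ^ 2 :=
  stmt_4_general d N hN σ hσ w hw μ
end

section
/- Let V₀ be α-strongly convex and L-smooth on ℝ^d with 0 < α < L. Then for any fixed x' ∈ ℝ^d, ∫ exp(-V₀(x') - ⟨∇V₀(x'), x-x'⟩ - (α/2)‖x-x'‖²) dx / ∫ exp(-V₀(x)) dx ≤ (L/α)^{d/2} · exp( ((L-α)/(2αL)) ‖∇V₀(x')‖² ); in particular, with α = λ₀ - η₀β and L = λ₀ + η₀β, this bound equals ((λ₀+η₀β)/(λ₀-η₀β))^{d/2} exp( (η₀β/(λ₀² - η₀²β²)) ‖∇V₀(x')‖² ). -/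
open MeasureTheory Real RealInnerProductSpace

section Aux

variable {E : Type*} [NormedAddCommGroup E] [NormedSpace ℝ E]

/-- Taylor-type upper bound from a bound on the second directional derivative. -/
lemma taylor_ub {f : E → ℝ} (hf : ContDiff ℝ 2 f) (C : ℝ)
    (hC : ∀ x v, (fderiv ℝ (fun y => fderiv ℝ f y v) x) v ≤ C * ‖v‖ ^ 2)
    (x' x : E) :
    f x ≤ f x' + fderiv ℝ f x' (x - x') + C / 2 * ‖x - x'‖ ^ 2 := by
  set v := x - x' with hv
  have hfd : Differentiable ℝ f := hf.differentiable two_ne_zero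
  have hfd1 : ContDiff ℝ 1 (fderiv ℝ f) := hf.fderiv_right (le_refl _)
  have hfd1' : Differentiable ℝ (fun y => fderiv ℝ f y v) :=
    (hfd1.clm_apply contDiff_const).differentiable one_ne_zero
  have hc : ∀ t : ℝ, HasDerivAt (fun t : ℝ => x' + t • v) v t := fun t => by
    simpa using ((hasDerivAt_id t).smul_const v).const_add x'
  set φ : ℝ → ℝ := fun t => f (x' + t • v) with hφdef
  set ψ : ℝ → ℝ := fun t => fderiv ℝ f (x' + t • v) v with hψdef
  have hφ : ∀ t, HasDerivAt φ (ψ t) t := fun t =>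
    (hfd _).hasFDerivAt.comp_hasDerivAt t (hc t)
  have hψ : ∀ t, HasDerivAt ψ
      ((fderiv ℝ (fun y => fderiv ℝ f y v) (x' + t • v)) v) t := fun t =>
    ((hfd1' _).hasFDerivAt).comp_hasDerivAt t (hc t)
  -- step 1 : ψ t - ψ 0 ≤ C‖v‖² t for t ≥ 0
  set g : ℝ → ℝ := fun t => C * ‖v‖ ^ 2 * t - ψ t with hgdef
  have hg : ∀ t, HasDerivAt g
      (C * ‖v‖ ^ 2 - (fderiv ℝ (fun y => fderiv ℝ f y v) (x' + t • v)) v) t := fun t => by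
    have h0 := ((hasDerivAt_id t).const_mul (C * ‖v‖ ^ 2)).sub (hψ t)
    rw [mul_one] at h0
    exact h0
  have hgmono : Monotone g := by
    apply monotone_of_deriv_nonneg
    · exact fun t => (hg t).differentiableAt
    · intro t
      rw [(hg t).deriv]
      have := hC (x' + t • v) v
      linarith
  have hstep1 : ∀ t : ℝ, 0 ≤ t → ψ t - ψ 0 ≤ C * ‖v‖ ^ 2 * t := by
    intro t ht
    have := hgmono ht
    simp only [hgdef, mul_zero] at this
    linarith
  -- step 2 : φ 1 ≤ φ 0 + ψ 0 + C‖v‖²/2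
  set h : ℝ → ℝ := fun t => f x' + ψ 0 * t + C * ‖v‖ ^ 2 / 2 * t ^ 2 - φ t with hhdef
  have hh : ∀ t, HasDerivAt h (ψ 0 + C * ‖v‖ ^ 2 * t - ψ t) t := fun t => by
    have h1 : HasDerivAt (fun t : ℝ => f x' + ψ 0 * t + C * ‖v‖ ^ 2 / 2 * t ^ 2 - φ t)
        (0 + ψ 0 * 1 + C * ‖v‖ ^ 2 / 2 * (2 * t ^ 1) - ψ t) t := by
      exact (((hasDerivAt_const t (f x')).add ((hasDerivAt_id t).const_mul (ψ 0))).add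
        ((hasDerivAt_pow 2 t).const_mul (C * ‖v‖ ^ 2 / 2))).sub (hφ t)
    convert h1 using 1
    ring
  have hmono : MonotoneOn h (Set.Ici (0 : ℝ)) := by
    apply monotoneOn_of_deriv_nonneg (convex_Ici 0)
    · have hdiff : Differentiable ℝ h := fun t => (hh t).differentiableAt
      exact hdiff.continuous.continuousOn
    · intro t _
      exact ((hh t).differentiableAt).differentiableWithinAt
    · intro t ht
      rw [interior_Ici] at ht
      rw [(hh t).deriv]
      have := hstep1 t (le_of_lt ht)
      linarith
  have h01 : h 0 ≤ h 1 := hmono (by simp) (by norm_num) (by norm_num)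
  have hφ0 : φ 0 = f x' := by simp [hφdef]
  have hφ1 : φ 1 = f x := by simp [hφdef, hv]
  have hψ0 : ψ 0 = fderiv ℝ f x' v := by simp [hψdef]
  simp only [hhdef, hφ0, hφ1, hψ0] at h01
  nlinarith [h01]

end Aux

section Gauss

variable {V : Type*} [NormedAddCommGroup V] [InnerProductSpace ℝ V] [FiniteDimensional ℝ V]
  [MeasurableSpace V] [BorelSpace V]

lemma cast_gauss_arg (b c : ℝ) (w v : V) :
    (-(b : ℂ) * (‖v‖ : ℂ) ^ 2 + (c : ℂ) * (⟪w, v⟫ : ℂ))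
      = ((-b * ‖v‖ ^ 2 + c * ⟪w, v⟫ : ℝ) : ℂ) := by push_cast; ring

lemma integrable_rexp_gauss {b : ℝ} (hb : 0 < b) (c : ℝ) (w : V) :
    Integrable (fun v : V => rexp (-b * ‖v‖ ^ 2 + c * ⟪w, v⟫)) := by
  have h := (GaussianFourier.integrable_cexp_neg_mul_sq_norm_add (V := V) (b := (b : ℂ))
    (by simpa using hb) (c : ℂ) w).norm
  apply h.congr
  filter_upwards with v
  rw [cast_gauss_arg, Complex.norm_exp, Complex.ofReal_re]

lemma integral_rexp_gauss {b : ℝ} (hb : 0 < b) (c : ℝ) (w : V) :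
    ∫ v : V, rexp (-b * ‖v‖ ^ 2 + c * ⟪w, v⟫) =
      (π / b) ^ ((Module.finrank ℝ V : ℝ) / 2) * rexp (c ^ 2 * ‖w‖ ^ 2 / (4 * b)) := by
  have h := GaussianFourier.integral_cexp_neg_mul_sq_norm_add (V := V) (b := (b : ℂ))
    (by simpa using hb) (c : ℂ) w
  have key : ∀ v : V, ((rexp (-b * ‖v‖ ^ 2 + c * ⟪w, v⟫) : ℝ) : ℂ)
      = Complex.exp (-(b : ℂ) * ‖v‖ ^ 2 + (c : ℂ) * ⟪w, v⟫) := fun v => by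
    rw [cast_gauss_arg, Complex.ofReal_exp]
  rw [← Complex.ofReal_inj]
  calc ((∫ v : V, rexp (-b * ‖v‖ ^ 2 + c * ⟪w, v⟫) : ℝ) : ℂ)
      = ∫ v : V, ((rexp (-b * ‖v‖ ^ 2 + c * ⟪w, v⟫) : ℝ) : ℂ) := integral_ofReal.symm
    _ = ∫ v : V, Complex.exp (-(b : ℂ) * ‖v‖ ^ 2 + (c : ℂ) * ⟪w, v⟫) :=
        integral_congr_ae (Filter.Eventually.of_forall fun v => key v)
    _ = ((π : ℂ) / b) ^ ((Module.finrank ℝ V : ℂ) / 2)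
        * Complex.exp ((c : ℂ) ^ 2 * (‖w‖ : ℂ) ^ 2 / (4 * b)) := h
    _ = (((π / b) ^ ((Module.finrank ℝ V : ℝ) / 2) * rexp (c ^ 2 * ‖w‖ ^ 2 / (4 * b)) : ℝ) : ℂ) := by
        rw [Complex.ofReal_mul, Complex.ofReal_exp, Complex.ofReal_cpow (by positivity)]
        congr 1
        · congr 1
          · push_cast; ring
          · push_cast; ring
        · push_cast; ring

end Gauss

/-- For `V₀` `α`-strongly convex and `L`-smooth (`0 < α < L`) and any `x'`,
the ratio of the Gaussian proposal mass to the target mass is bounded: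
`∫ exp(-V₀(x') - ⟨∇V₀(x'), x-x'⟩ - (α/2)‖x-x'‖²) dx
  ≤ (L/α)^{d/2} exp(((L-α)/(2αL))‖∇V₀(x')‖²) ∫ exp(-V₀(x)) dx`. -/
theorem stmt_10 (d : ℕ) (α L : ℝ) (hα : 0 < α) (hαL : α < L)
    (V₀ : EuclideanSpace ℝ (Fin d) → ℝ) (hV : ContDiff ℝ 2 V₀)
    (hlow : ∀ x v : EuclideanSpace ℝ (Fin d),
      α * ‖v‖ ^ 2 ≤ (fderiv ℝ (fun y => fderiv ℝ V₀ y v) x) v)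
    (hup : ∀ x v : EuclideanSpace ℝ (Fin d),
      (fderiv ℝ (fun y => fderiv ℝ V₀ y v) x) v ≤ L * ‖v‖ ^ 2)
    (x' : EuclideanSpace ℝ (Fin d)) :
    (∫ x, Real.exp (-V₀ x' - ⟪gradient V₀ x', x - x'⟫ - (α / 2) * ‖x - x'‖ ^ 2)) ≤
      (L / α) ^ ((d : ℝ) / 2) *
        Real.exp ((L - α) / (2 * α * L) * ‖gradient V₀ x'‖ ^ 2) *
        ∫ x, Real.exp (-V₀ x) := by
  have hL : 0 < L := lt_trans hα hαL
  set g := gradient V₀ x' with hg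
  have hinner : ∀ y : EuclideanSpace ℝ (Fin d), ⟪g, y⟫ = fderiv ℝ V₀ x' y := fun y => by
    rw [hg, gradient]; exact InnerProductSpace.toDual_symm_apply
  -- general computation for any b > 0
  have hcomp : ∀ b : ℝ, 0 < b →
      (∫ x : EuclideanSpace ℝ (Fin d), rexp (-V₀ x' - ⟪g, x - x'⟫ - b / 2 * ‖x - x'‖ ^ 2))
        = rexp (-V₀ x') * ((π / (b / 2)) ^ ((d : ℝ) / 2) * rexp (‖g‖ ^ 2 / (2 * b))) := by
    intro b hb
    have h1 : (∫ x : EuclideanSpace ℝ (Fin d), rexp (-V₀ x' - ⟪g, x - x'⟫ - b / 2 * ‖x - x'‖ ^ 2))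
        = ∫ u : EuclideanSpace ℝ (Fin d), rexp (-V₀ x' - ⟪g, u⟫ - b / 2 * ‖u‖ ^ 2) :=
      integral_sub_right_eq_self (fun u => rexp (-V₀ x' - ⟪g, u⟫ - b / 2 * ‖u‖ ^ 2)) x'
    rw [h1]
    have h2 : ∀ u : EuclideanSpace ℝ (Fin d),
        rexp (-V₀ x' - ⟪g, u⟫ - b / 2 * ‖u‖ ^ 2)
          = rexp (-V₀ x') * rexp (-(b / 2) * ‖u‖ ^ 2 + (-1 : ℝ) * ⟪g, u⟫) := fun u => by
      rw [← Real.exp_add]; congr 1; ring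
    simp_rw [h2]
    rw [integral_const_mul, integral_rexp_gauss (by positivity : (0 : ℝ) < b / 2) (-1) g]
    rw [show ((Module.finrank ℝ (EuclideanSpace ℝ (Fin d)) : ℝ)) = (d : ℝ) by simp]
    congr 2
    ring
  -- Taylor bounds
  have hUB : ∀ x, V₀ x ≤ V₀ x' + ⟪g, x - x'⟫ + L / 2 * ‖x - x'‖ ^ 2 := fun x => by
    rw [hinner]; exact taylor_ub hV L hup x' x
  have hVneg : ContDiff ℝ 2 (fun y => -V₀ y) := hV.neg
  have hCneg : ∀ x v : EuclideanSpace ℝ (Fin d),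
      (fderiv ℝ (fun y => fderiv ℝ (fun z => -V₀ z) y v) x) v ≤ (-α) * ‖v‖ ^ 2 := by
    intro x v
    have e1 : (fun y => fderiv ℝ (fun z => -V₀ z) y v) = fun y => -((fderiv ℝ V₀ y) v) := by
      funext y; rw [fderiv_fun_neg]; simp
    rw [e1, fderiv_fun_neg]
    simp only [ContinuousLinearMap.neg_apply]
    have h3 : fderiv ℝ (fun y => (fderiv ℝ V₀ y) v) x v ≥ α * ‖v‖ ^ 2 := hlow x v
    linarith
  have hLB : ∀ x, V₀ x' + ⟪g, x - x'⟫ + α / 2 * ‖x - x'‖ ^ 2 ≤ V₀ x := fun x => by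
    have h4 := taylor_ub hVneg (-α) hCneg x' x
    rw [show fderiv ℝ (fun y => -V₀ y) x' = -fderiv ℝ V₀ x' from fderiv_fun_neg] at h4
    simp only [ContinuousLinearMap.neg_apply] at h4
    rw [hinner]
    linarith
  -- integrability
  have hGa : ∀ b : ℝ, 0 < b →
      Integrable (fun x : EuclideanSpace ℝ (Fin d) =>
        rexp (-V₀ x' - ⟪g, x - x'⟫ - b / 2 * ‖x - x'‖ ^ 2)) := by
    intro b hb
    have h5 : Integrable (fun u : EuclideanSpace ℝ (Fin d) =>
        rexp (-V₀ x' - ⟪g, u⟫ - b / 2 * ‖u‖ ^ 2)) := by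
      have h6 := (integrable_rexp_gauss (b := b / 2) (by positivity) (-1) g).const_mul
        (rexp (-V₀ x'))
      apply h6.congr
      filter_upwards with u
      rw [← Real.exp_add]; congr 1; ring
    exact h5.comp_sub_right x'
  have hVint : Integrable (fun x : EuclideanSpace ℝ (Fin d) => rexp (-V₀ x)) := by
    apply (hGa α hα).mono'
      (Real.continuous_exp.comp hV.continuous.neg).aestronglyMeasurable
    filter_upwards with x
    simp only [Function.comp_apply]
    rw [Real.norm_eq_abs, Real.abs_exp]
    exact Real.exp_le_exp.2 (by have := hLB x; simp only [Pi.neg_apply]; linarith)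
  -- lower bound on the target mass
  have hRlow : rexp (-V₀ x') * ((π / (L / 2)) ^ ((d : ℝ) / 2) * rexp (‖g‖ ^ 2 / (2 * L)))
      ≤ ∫ x, rexp (-V₀ x) := by
    rw [← hcomp L hL]
    apply integral_mono (hGa L hL) hVint
    intro x
    exact Real.exp_le_exp.2 (by have := hUB x; linarith)
  rw [hcomp α hα]
  have hKey : rexp (-V₀ x') * ((π / (α / 2)) ^ ((d : ℝ) / 2) * rexp (‖g‖ ^ 2 / (2 * α)))
      = ((L / α) ^ ((d : ℝ) / 2) * rexp ((L - α) / (2 * α * L) * ‖g‖ ^ 2)) *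
        (rexp (-V₀ x') * ((π / (L / 2)) ^ ((d : ℝ) / 2) * rexp (‖g‖ ^ 2 / (2 * L)))) := by
    have hpow : (π / (α / 2) : ℝ) ^ ((d : ℝ) / 2)
        = (L / α) ^ ((d : ℝ) / 2) * (π / (L / 2)) ^ ((d : ℝ) / 2) := by
      rw [← Real.mul_rpow (by positivity) (by positivity)]
      congr 1
      field_simp
    have hexp : rexp (‖g‖ ^ 2 / (2 * α))
        = rexp ((L - α) / (2 * α * L) * ‖g‖ ^ 2) * rexp (‖g‖ ^ 2 / (2 * L)) := by
      rw [← Real.exp_add]; congr 1; field_simp; ring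
    rw [hpow, hexp]; ring
  rw [hKey]
  exact mul_le_mul_of_nonneg_left hRlow (by positivity)
end
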